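/- Fix α > 0. Let v, φ : ℝ → ℝ be smooth, positive and 2π-periodic, and let ψ : ℝ → ℝ be any C⁴ 2π-periodic function. With g₁ = v^{-4/3}g_s and g₂ = φ^{-4/3}g₁ = (φv)^{-4/3}g_s, the following conformal covariance identities hold pointwise: (i) Q^α_{g₂} = φ^{5/3}·P^α_{g₁}φ, i.e. (vφ)^{5/3}·((α²/9)(vφ)'''' + (10α/9)(vφ)'' + vφ) = φ^{5/3}·( (α²/9)Δ_{g₁}(Δ_{g₁}φ) + (10α/9)∇_{g₁}(R^α_{g₁}·∇_{g₁}φ) + Q^α_{g₁}·φ ); (ii) P^α_{g₂}ψ = φ^{5/3}·P^α_{g₁}(ψφ). -/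

import Mathlib

open Real

/-- For `g = v^{-4/3} g_s`: the gradient `∇_g f = v^{2/3} f'`. -/
noncomputable def gradOp (v f : ℝ → ℝ) : ℝ → ℝ :=
  fun θ => (v θ) ^ ((2 : ℝ)/3) * deriv f θ

/-- For `g = v^{-4/3} g_s`: the Laplacian `Δ_g f = v^{4/3} f'' + (2/3) v^{1/3} v' f'`. -/
noncomputable def lapOp (v f : ℝ → ℝ) : ℝ → ℝ :=
  fun θ => (v θ) ^ ((4 : ℝ)/3) * iteratedDeriv 2 f θ +
    (2/3) * (v θ) ^ ((1 : ℝ)/3) * deriv v θ * deriv f θ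

/-- For `g = v^{-4/3} g_s`: the `α`-scalar curvature
`R^α_g = (α/3) v^{1/3} v'' − (2α/9) v^{-2/3} (v')² + v^{4/3}`. -/
noncomputable def Rcurv (α : ℝ) (v : ℝ → ℝ) : ℝ → ℝ :=
  fun θ => (α/3) * (v θ) ^ ((1 : ℝ)/3) * iteratedDeriv 2 v θ -
    (2 * α/9) * (v θ) ^ ((-2 : ℝ)/3) * (deriv v θ) ^ 2 + (v θ) ^ ((4 : ℝ)/3)

/-- For `g = v^{-4/3} g_s`: the `α`-`Q`-curvature
`Q^α_g = v^{5/3} ((α²/9) v'''' + (10α/9) v'' + v)`. -/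
noncomputable def Qcurv (α : ℝ) (v : ℝ → ℝ) : ℝ → ℝ :=
  fun θ => (v θ) ^ ((5 : ℝ)/3) *
    ((α ^ 2/9) * iteratedDeriv 4 v θ + (10 * α/9) * iteratedDeriv 2 v θ + v θ)

/-- For `g = v^{-4/3} g_s`: the operator
`P^α_g f = (α²/9) Δ_g(Δ_g f) + (10α/9) ∇_g(R^α_g ∇_g f) + Q^α_g f`. -/
noncomputable def POp (α : ℝ) (v f : ℝ → ℝ) : ℝ → ℝ :=
  fun θ => (α ^ 2/9) * lapOp v (lapOp v f) θ +
    (10 * α/9) * gradOp v (fun t => Rcurv α v t * gradOp v f t) θ +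
    Qcurv α v θ * f θ

lemma cube_rpow_13 {x : ℝ} (hx : 0 < x) : ((x^3 : ℝ)) ^ ((1:ℝ)/3) = x := by
  rw [← Real.rpow_natCast x 3, ← Real.rpow_mul hx.le,
    show ((3:ℕ):ℝ) * ((1:ℝ)/3) = ((1:ℕ):ℝ) by norm_num, Real.rpow_natCast, pow_one]

lemma cube_rpow_23 {x : ℝ} (hx : 0 < x) : ((x^3 : ℝ)) ^ ((2:ℝ)/3) = x ^ 2 := by
  rw [← Real.rpow_natCast x 3, ← Real.rpow_mul hx.le,
    show ((3:ℕ):ℝ) * ((2:ℝ)/3) = ((2:ℕ):ℝ) by norm_num, Real.rpow_natCast]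

lemma cube_rpow_43 {x : ℝ} (hx : 0 < x) : ((x^3 : ℝ)) ^ ((4:ℝ)/3) = x ^ 4 := by
  rw [← Real.rpow_natCast x 3, ← Real.rpow_mul hx.le,
    show ((3:ℕ):ℝ) * ((4:ℝ)/3) = ((4:ℕ):ℝ) by norm_num, Real.rpow_natCast]

lemma cube_rpow_53 {x : ℝ} (hx : 0 < x) : ((x^3 : ℝ)) ^ ((5:ℝ)/3) = x ^ 5 := by
  rw [← Real.rpow_natCast x 3, ← Real.rpow_mul hx.le,
    show ((3:ℕ):ℝ) * ((5:ℝ)/3) = ((5:ℕ):ℝ) by norm_num, Real.rpow_natCast]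

lemma cube_rpow_m23 {x : ℝ} (hx : 0 < x) : ((x^3 : ℝ)) ^ ((-2:ℝ)/3) = (x ^ 2)⁻¹ := by
  rw [← Real.rpow_natCast x 3, ← Real.rpow_mul hx.le,
    show ((3:ℕ):ℝ) * ((-2:ℝ)/3) = -(2:ℝ) by norm_num, Real.rpow_neg hx.le,
    ← Real.rpow_natCast x 2]
  norm_num

/-- derivatives of a cube. -/
lemma cube_jets (p p1 p2 p3 p4 : ℝ → ℝ)
    (hp : ∀ x, HasDerivAt p (p1 x) x) (hp1 : ∀ x, HasDerivAt p1 (p2 x) x)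
    (hp2 : ∀ x, HasDerivAt p2 (p3 x) x) (hp3 : ∀ x, HasDerivAt p3 (p4 x) x) :
    (∀ x, HasDerivAt (fun t => p t ^ 3) (3 * p x ^ 2 * p1 x) x) ∧
    (∀ x, HasDerivAt (fun x => 3 * p x ^ 2 * p1 x) (6 * p x * p1 x ^ 2 + 3 * p x ^ 2 * p2 x) x) ∧
    (∀ x, HasDerivAt (fun x => 6 * p x * p1 x ^ 2 + 3 * p x ^ 2 * p2 x)
      (6 * p1 x ^ 3 + 18 * p x * p1 x * p2 x + 3 * p x ^ 2 * p3 x) x) ∧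
    (∀ x, HasDerivAt (fun x => 6 * p1 x ^ 3 + 18 * p x * p1 x * p2 x + 3 * p x ^ 2 * p3 x)
      (36 * p1 x ^ 2 * p2 x + 24 * p x * p1 x * p3 x + 18 * p x * p2 x ^ 2 + 3 * p x ^ 2 * p4 x)
      x) ∧
    deriv (fun t => p t ^ 3) = (fun x => 3 * p x ^ 2 * p1 x) ∧
    iteratedDeriv 2 (fun t => p t ^ 3) = (fun x => 6 * p x * p1 x ^ 2 + 3 * p x ^ 2 * p2 x) ∧
    iteratedDeriv 4 (fun t => p t ^ 3) = (fun x => 36 * p1 x ^ 2 * p2 x + 24 * p x * p1 x * p3 x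
      + 18 * p x * p2 x ^ 2 + 3 * p x ^ 2 * p4 x) := by
  have h1 : ∀ x, HasDerivAt (fun t => p t ^ 3) (3 * p x ^ 2 * p1 x) x := by
    intro x
    have h := (hp x).pow 3
    exact h.congr_deriv (by (try simp only [Pi.pow_apply, Pi.mul_apply, Pi.add_apply]); push_cast; ring)
  have d1 : deriv (fun t => p t ^ 3) = fun x => 3 * p x ^ 2 * p1 x :=
    funext fun x => (h1 x).deriv
  have h2 : ∀ x, HasDerivAt (fun x => 3 * p x ^ 2 * p1 x)
      (6 * p x * p1 x ^ 2 + 3 * p x ^ 2 * p2 x) x := by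
    intro x
    have h := (((hp x).pow 2).const_mul 3).mul (hp1 x)
    exact h.congr_deriv (by (try simp only [Pi.pow_apply, Pi.mul_apply, Pi.add_apply]); push_cast; ring)
  have d2 : deriv (fun x => 3 * p x ^ 2 * p1 x)
      = fun x => 6 * p x * p1 x ^ 2 + 3 * p x ^ 2 * p2 x := funext fun x => (h2 x).deriv
  have h3 : ∀ x, HasDerivAt (fun x => 6 * p x * p1 x ^ 2 + 3 * p x ^ 2 * p2 x)
      (6 * p1 x ^ 3 + 18 * p x * p1 x * p2 x + 3 * p x ^ 2 * p3 x) x := by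
    intro x
    have h := (((hp x).const_mul 6).mul ((hp1 x).pow 2)).add
      ((((hp x).pow 2).const_mul 3).mul (hp2 x))
    exact h.congr_deriv (by (try simp only [Pi.pow_apply, Pi.mul_apply, Pi.add_apply]); push_cast; ring)
  have d3 : deriv (fun x => 6 * p x * p1 x ^ 2 + 3 * p x ^ 2 * p2 x)
      = fun x => 6 * p1 x ^ 3 + 18 * p x * p1 x * p2 x + 3 * p x ^ 2 * p3 x :=
    funext fun x => (h3 x).deriv
  have h4 : ∀ x, HasDerivAt (fun x => 6 * p1 x ^ 3 + 18 * p x * p1 x * p2 x + 3 * p x ^ 2 * p3 x)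
      (36 * p1 x ^ 2 * p2 x + 24 * p x * p1 x * p3 x + 18 * p x * p2 x ^ 2 + 3 * p x ^ 2 * p4 x)
      x := by
    intro x
    have h := ((((hp1 x).pow 3).const_mul 6).add
      ((((hp x).const_mul 18).mul (hp1 x)).mul (hp2 x))).add
        ((((hp x).pow 2).const_mul 3).mul (hp3 x))
    exact h.congr_deriv (by (try simp only [Pi.pow_apply, Pi.mul_apply, Pi.add_apply]); push_cast; ring)
  have d4 : deriv (fun x => 6 * p1 x ^ 3 + 18 * p x * p1 x * p2 x + 3 * p x ^ 2 * p3 x)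
      = fun x => 36 * p1 x ^ 2 * p2 x + 24 * p x * p1 x * p3 x + 18 * p x * p2 x ^ 2
        + 3 * p x ^ 2 * p4 x := funext fun x => (h4 x).deriv
  refine ⟨h1, h2, h3, h4, d1, ?_, ?_⟩
  · rw [iteratedDeriv_succ, iteratedDeriv_one, d1, d2]
  · rw [show (4:ℕ) = 3 + 1 from rfl, iteratedDeriv_succ,
      show (3:ℕ) = 2 + 1 from rfl, iteratedDeriv_succ,
      iteratedDeriv_succ, iteratedDeriv_one, d1, d2, d3, d4]

/-- Master computation: `POp` on a metric determined by a cube `p^3`. -/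
lemma POp_cube (α : ℝ) (p p1 p2 p3 p4 f f1 f2 f3 f4 : ℝ → ℝ)
    (hpos : ∀ x, 0 < p x)
    (hp : ∀ x, HasDerivAt p (p1 x) x) (hp1 : ∀ x, HasDerivAt p1 (p2 x) x)
    (hp2 : ∀ x, HasDerivAt p2 (p3 x) x) (hp3 : ∀ x, HasDerivAt p3 (p4 x) x)
    (hf : ∀ x, HasDerivAt f (f1 x) x) (hf1 : ∀ x, HasDerivAt f1 (f2 x) x)
    (hf2 : ∀ x, HasDerivAt f2 (f3 x) x) (hf3 : ∀ x, HasDerivAt f3 (f4 x) x)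
    (θ : ℝ) :
    POp α (fun t => p t ^ 3) f θ =
      f θ * p θ^8 + (20/3)*α*f θ*p θ^6*p1 θ^2 + (10/3)*α*f θ*p θ^7*p2 θ
      + (20/3)*α*f1 θ*p θ^7*p1 θ + (10/9)*α*f2 θ*p θ^8
      + 4*α^2*f θ*p θ^5*p1 θ^2*p2 θ + (8/3)*α^2*f θ*p θ^6*p1 θ*p3 θ
      + 2*α^2*f θ*p θ^6*p2 θ^2 + (1/3)*α^2*f θ*p θ^7*p4 θ
      + (8/3)*α^2*f1 θ*p θ^5*p1 θ^3 + 8*α^2*f1 θ*p θ^6*p1 θ*p2 θ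
      + (4/3)*α^2*f1 θ*p θ^7*p3 θ + 4*α^2*f2 θ*p θ^6*p1 θ^2
      + 2*α^2*f2 θ*p θ^7*p2 θ + (4/3)*α^2*f3 θ*p θ^7*p1 θ + (1/9)*α^2*f4 θ*p θ^8 := by
  obtain ⟨-, -, -, -, dv1, dv2, dv4⟩ := cube_jets p p1 p2 p3 p4 hp hp1 hp2 hp3
  have df : deriv f = f1 := funext fun x => (hf x).deriv
  have df1 : deriv f1 = f2 := funext fun x => (hf1 x).deriv
  have d2f : iteratedDeriv 2 f = f2 := by rw [iteratedDeriv_succ, iteratedDeriv_one, df, df1]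
  -- inner Laplacian
  have hL : lapOp (fun t => p t ^ 3) f = fun x => p x^4 * f2 x + 2*p x^3*p1 x*f1 x := by
    funext x
    simp only [lapOp, d2f, df, dv1]
    rw [cube_rpow_43 (hpos x), cube_rpow_13 (hpos x)]
    ring
  -- first derivative of the inner Laplacian
  have hLp : ∀ x, HasDerivAt (fun x => p x^4 * f2 x + 2*p x^3*p1 x*f1 x)
      (6*f1 x*p x^2*p1 x^2 + 2*f1 x*p x^3*p2 x + 6*f2 x*p x^3*p1 x + f3 x*p x^4) x := by
    intro x
    have h := (((hp x).pow 4).mul (hf2 x)).add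
      (((((hp x).pow 3).const_mul 2).mul (hp1 x)).mul (hf1 x))
    exact h.congr_deriv (by (try simp only [Pi.pow_apply, Pi.mul_apply, Pi.add_apply]); push_cast; ring)
  have dL1 : deriv (fun x => p x^4 * f2 x + 2*p x^3*p1 x*f1 x)
      = fun x => 6*f1 x*p x^2*p1 x^2 + 2*f1 x*p x^3*p2 x + 6*f2 x*p x^3*p1 x + f3 x*p x^4 :=
    funext fun x => (hLp x).deriv
  -- second derivative of the inner Laplacian
  have hLpp : ∀ x, HasDerivAt
      (fun x => 6*f1 x*p x^2*p1 x^2 + 2*f1 x*p x^3*p2 x + 6*f2 x*p x^3*p1 x + f3 x*p x^4)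
      (12*f1 x*p x*p1 x^3 + 18*f1 x*p x^2*p1 x*p2 x + 2*f1 x*p x^3*p3 x + 24*f2 x*p x^2*p1 x^2
        + 8*f2 x*p x^3*p2 x + 10*f3 x*p x^3*p1 x + f4 x*p x^4) x := by
    intro x
    have h := ((((((hf1 x).const_mul 6).mul ((hp x).pow 2)).mul ((hp1 x).pow 2)).add
      ((((hf1 x).const_mul 2).mul ((hp x).pow 3)).mul (hp2 x))).add
      ((((hf2 x).const_mul 6).mul ((hp x).pow 3)).mul (hp1 x))).add
      ((hf3 x).mul ((hp x).pow 4))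
    exact h.congr_deriv (by (try simp only [Pi.pow_apply, Pi.mul_apply, Pi.add_apply]); push_cast; ring)
  have dL2 : iteratedDeriv 2 (fun x => p x^4 * f2 x + 2*p x^3*p1 x*f1 x)
      = fun x => 12*f1 x*p x*p1 x^3 + 18*f1 x*p x^2*p1 x*p2 x + 2*f1 x*p x^3*p3 x
        + 24*f2 x*p x^2*p1 x^2 + 8*f2 x*p x^3*p2 x + 10*f3 x*p x^3*p1 x + f4 x*p x^4 := by
    rw [iteratedDeriv_succ, iteratedDeriv_one, dL1]
    exact funext fun x => (hLpp x).deriv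
  -- the R-times-gradient term
  have hRG : (fun t => Rcurv α (fun t => p t ^ 3) t * gradOp (fun t => p t ^ 3) f t)
      = fun x => α*p x^5*p2 x*f1 x + p x^6*f1 x := by
    funext x
    simp only [Rcurv, gradOp, d2f, df, dv1, dv2]
    rw [cube_rpow_43 (hpos x), cube_rpow_13 (hpos x), cube_rpow_23 (hpos x),
      cube_rpow_m23 (hpos x)]
    have hx2 : (p x ^ 2 : ℝ) ≠ 0 := pow_ne_zero 2 (hpos x).ne'
    field_simp
    ring
  have hHp : ∀ x, HasDerivAt (fun x => α*p x^5*p2 x*f1 x + p x^6*f1 x)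
      (5*α*f1 x*p x^4*p1 x*p2 x + α*f1 x*p x^5*p3 x + α*f2 x*p x^5*p2 x
        + 6*f1 x*p x^5*p1 x + f2 x*p x^6) x := by
    intro x
    have h := (((((hp x).pow 5).const_mul α).mul (hp2 x)).mul (hf1 x)).add
      (((hp x).pow 6).mul (hf1 x))
    exact h.congr_deriv (by (try simp only [Pi.pow_apply, Pi.mul_apply, Pi.add_apply]); push_cast; ring)
  have dH : deriv (fun x => α*p x^5*p2 x*f1 x + p x^6*f1 x)
      = fun x => 5*α*f1 x*p x^4*p1 x*p2 x + α*f1 x*p x^5*p3 x + α*f2 x*p x^5*p2 x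
        + 6*f1 x*p x^5*p1 x + f2 x*p x^6 := funext fun x => (hHp x).deriv
  -- assemble
  simp only [POp]
  rw [hL, hRG]
  simp only [lapOp, gradOp, Qcurv, dL1, dL2, dH, dv2, dv4, dv1]
  rw [cube_rpow_43 (hpos θ), cube_rpow_13 (hpos θ), cube_rpow_23 (hpos θ),
    cube_rpow_53 (hpos θ)]
  ring

lemma rpow_third_cube {x : ℝ} (hx : 0 < x) : (x ^ ((1:ℝ)/3)) ^ 3 = x := by
  rw [← Real.rpow_natCast (x ^ ((1:ℝ)/3)) 3, ← Real.rpow_mul hx.le,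
    show (1:ℝ)/3 * ((3:ℕ):ℝ) = 1 by norm_num, Real.rpow_one]

lemma smooth_chain (g : ℝ → ℝ) (hg : ContDiff ℝ (⊤ : ℕ∞) g) :
    (∀ x, HasDerivAt g (deriv g x) x) ∧ ContDiff ℝ (⊤ : ℕ∞) (deriv g) :=
  ⟨fun x => ((contDiff_infty_iff_deriv.mp hg).1 x).hasDerivAt,
    (contDiff_infty_iff_deriv.mp hg).2⟩

lemma c4_chain {n : ℕ} (g : ℝ → ℝ) (hg : ContDiff ℝ ((n+1 : ℕ) : ℕ∞) g) :
    (∀ x, HasDerivAt g (deriv g x) x) ∧ ContDiff ℝ ((n : ℕ) : ℕ∞) (deriv g) := by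
  constructor
  · intro x
    exact (hg.differentiable (by simp) x).hasDerivAt
  · have h := ContDiff.iterate_deriv' n 1 (f := g) (by exact_mod_cast hg)
    simpa using h

/-- Proposition 5 of the paper: conformal covariance of `P^α_g`.
With `g₁ = v^{-4/3} g_s` and `g₂ = φ^{-4/3} g₁ = (φv)^{-4/3} g_s`:
(i) `Q^α_{g₂} = φ^{5/3} P^α_{g₁} φ` and (ii) `P^α_{g₂} ψ = φ^{5/3} P^α_{g₁}(ψφ)`. -/
theorem conformal_covariance_P_alpha
    (α : ℝ) (hα : 0 < α) (v φ ψ : ℝ → ℝ)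
    (hv : ContDiff ℝ (⊤ : ℕ∞) v) (hφ : ContDiff ℝ (⊤ : ℕ∞) φ) (hψ : ContDiff ℝ 4 ψ)
    (hvpos : ∀ θ, 0 < v θ) (hφpos : ∀ θ, 0 < φ θ)
    (hvper : Function.Periodic v (2 * π)) (hφper : Function.Periodic φ (2 * π))
    (hψper : Function.Periodic ψ (2 * π)) :
    ∀ θ : ℝ,
      -- (i)  Q^α_{g₂} = φ^{5/3} P^α_{g₁} φ
      ((v θ * φ θ) ^ ((5 : ℝ)/3) *
          ((α ^ 2/9) * iteratedDeriv 4 (fun t => v t * φ t) θ +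
            (10 * α/9) * iteratedDeriv 2 (fun t => v t * φ t) θ + v θ * φ θ) =
        (φ θ) ^ ((5 : ℝ)/3) * POp α v φ θ) ∧
      -- (ii)  P^α_{g₂} ψ = φ^{5/3} P^α_{g₁}(ψφ)
      (POp α (fun t => φ t * v t) ψ θ =
        (φ θ) ^ ((5 : ℝ)/3) * POp α v (fun t => ψ t * φ t) θ) := by
  -- cube roots
  set u : ℝ → ℝ := fun t => (v t) ^ ((1:ℝ)/3) with hu_def
  set w : ℝ → ℝ := fun t => (φ t) ^ ((1:ℝ)/3) with hw_def
  have hupos : ∀ x, 0 < u x := fun x => Real.rpow_pos_of_pos (hvpos x) _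
  have hwpos : ∀ x, 0 < w x := fun x => Real.rpow_pos_of_pos (hφpos x) _
  have hu3 : ∀ t, u t ^ 3 = v t := fun t => rpow_third_cube (hvpos t)
  have hw3 : ∀ t, w t ^ 3 = φ t := fun t => rpow_third_cube (hφpos t)
  have hu : ContDiff ℝ (⊤ : ℕ∞) u := contDiff_iff_contDiffAt.2 fun x =>
    (contDiffAt_rpow_const_of_ne (hvpos x).ne').comp x (hv.of_le (by simp)).contDiffAt
  have hw : ContDiff ℝ (⊤ : ℕ∞) w := contDiff_iff_contDiffAt.2 fun x =>
    (contDiffAt_rpow_const_of_ne (hφpos x).ne').comp x (hφ.of_le (by simp)).contDiffAt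
  -- derivative chains of the cube roots
  obtain ⟨hud, hu'⟩ := smooth_chain u hu
  obtain ⟨hu1d, hu''⟩ := smooth_chain (deriv u) hu'
  obtain ⟨hu2d, hu'''⟩ := smooth_chain (deriv (deriv u)) hu''
  obtain ⟨hu3d, -⟩ := smooth_chain (deriv (deriv (deriv u))) hu'''
  obtain ⟨hwd, hw'⟩ := smooth_chain w hw
  obtain ⟨hw1d, hw''⟩ := smooth_chain (deriv w) hw'
  obtain ⟨hw2d, hw'''⟩ := smooth_chain (deriv (deriv w)) hw''
  obtain ⟨hw3d, -⟩ := smooth_chain (deriv (deriv (deriv w))) hw'''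
  -- derivative chain of ψ
  obtain ⟨hsd, hψ3⟩ := c4_chain (n := 3) ψ (by exact_mod_cast hψ)
  obtain ⟨hs1d, hψ2⟩ := c4_chain (n := 2) (deriv ψ) hψ3
  obtain ⟨hs2d, hψ1⟩ := c4_chain (n := 1) (deriv (deriv ψ)) hψ2
  obtain ⟨hs3d, -⟩ := c4_chain (n := 0) (deriv (deriv (deriv ψ))) hψ1
  intro θ
  constructor
  · -- part (i)
    -- jets of r = u * w
    have hr : ∀ x, HasDerivAt (fun t => u t * w t) (deriv u x * w x + u x * deriv w x) x :=
      fun x => (hud x).mul (hwd x)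
    have hr1 : ∀ x, HasDerivAt (fun x => deriv u x * w x + u x * deriv w x)
        (deriv (deriv u) x * w x + 2 * deriv u x * deriv w x + u x * deriv (deriv w) x) x := by
      intro x
      have h := ((hu1d x).mul (hwd x)).add ((hud x).mul (hw1d x))
      exact h.congr_deriv (by (try simp only [Pi.pow_apply, Pi.mul_apply, Pi.add_apply]); push_cast; ring)
    have hr2 : ∀ x, HasDerivAt
        (fun x => deriv (deriv u) x * w x + 2 * deriv u x * deriv w x + u x * deriv (deriv w) x)
        (deriv (deriv (deriv u)) x * w x + 3 * deriv (deriv u) x * deriv w x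
          + 3 * deriv u x * deriv (deriv w) x + u x * deriv (deriv (deriv w)) x) x := by
      intro x
      have h := (((hu2d x).mul (hwd x)).add (((hu1d x).const_mul 2).mul (hw1d x))).add
        ((hud x).mul (hw2d x))
      exact h.congr_deriv (by (try simp only [Pi.pow_apply, Pi.mul_apply, Pi.add_apply]); push_cast; ring)
    have hr3 : ∀ x, HasDerivAt
        (fun x => deriv (deriv (deriv u)) x * w x + 3 * deriv (deriv u) x * deriv w x
          + 3 * deriv u x * deriv (deriv w) x + u x * deriv (deriv (deriv w)) x)
        (deriv (deriv (deriv (deriv u))) x * w x + 4 * deriv (deriv (deriv u)) x * deriv w x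
          + 6 * deriv (deriv u) x * deriv (deriv w) x
          + 4 * deriv u x * deriv (deriv (deriv w)) x
          + u x * deriv (deriv (deriv (deriv w))) x) x := by
      intro x
      have h := ((((hu3d x).mul (hwd x)).add (((hu2d x).const_mul 3).mul (hw1d x))).add
        (((hu1d x).const_mul 3).mul (hw2d x))).add ((hud x).mul (hw3d x))
      exact h.congr_deriv (by (try simp only [Pi.pow_apply, Pi.mul_apply, Pi.add_apply]); push_cast; ring)
    obtain ⟨-, -, -, -, -, di2, di4⟩ := cube_jets (fun t => u t * w t) _ _ _ _ hr hr1 hr2 hr3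
    -- jets of w ^ 3 (the conformal factor as second argument of POp)
    obtain ⟨hG, hG1, hG2, hG3, -, -, -⟩ :=
      cube_jets w (deriv w) (deriv (deriv w)) (deriv (deriv (deriv w)))
        (deriv (deriv (deriv (deriv w)))) hwd hw1d hw2d hw3d
    have e4 : (fun t => v t * φ t) = (fun t => (u t * w t) ^ 3) :=
      funext fun t => by rw [mul_pow, hu3 t, hw3 t]
    have e5 : v θ * φ θ = (u θ * w θ) ^ 3 := by rw [mul_pow, hu3 θ, hw3 θ]
    have r5 : (φ θ) ^ ((5:ℝ)/3) = w θ ^ 5 := by rw [← hw3 θ, cube_rpow_53 (hwpos θ)]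
    have e2 : v = fun t => u t ^ 3 := funext fun t => (hu3 t).symm
    have e6 : φ = fun t => w t ^ 3 := funext fun t => (hw3 t).symm
    rw [e4, e5, r5, cube_rpow_53 (mul_pos (hupos θ) (hwpos θ))]
    simp only [di2, di4]
    conv_rhs => rw [e2, e6]
    rw [POp_cube α u (deriv u) (deriv (deriv u)) (deriv (deriv (deriv u)))
      (deriv (deriv (deriv (deriv u)))) (fun t => w t ^ 3) _ _ _ _
      hupos hud hu1d hu2d hu3d hG hG1 hG2 hG3 θ]
    ring
  · -- part (ii)
    -- jets of q = w * u
    have hq : ∀ x, HasDerivAt (fun t => w t * u t) (deriv w x * u x + w x * deriv u x) x :=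
      fun x => (hwd x).mul (hud x)
    have hq1 : ∀ x, HasDerivAt (fun x => deriv w x * u x + w x * deriv u x)
        (deriv (deriv w) x * u x + 2 * deriv w x * deriv u x + w x * deriv (deriv u) x) x := by
      intro x
      have h := ((hw1d x).mul (hud x)).add ((hwd x).mul (hu1d x))
      exact h.congr_deriv (by (try simp only [Pi.pow_apply, Pi.mul_apply, Pi.add_apply]); push_cast; ring)
    have hq2 : ∀ x, HasDerivAt
        (fun x => deriv (deriv w) x * u x + 2 * deriv w x * deriv u x + w x * deriv (deriv u) x)
        (deriv (deriv (deriv w)) x * u x + 3 * deriv (deriv w) x * deriv u x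
          + 3 * deriv w x * deriv (deriv u) x + w x * deriv (deriv (deriv u)) x) x := by
      intro x
      have h := (((hw2d x).mul (hud x)).add (((hw1d x).const_mul 2).mul (hu1d x))).add
        ((hwd x).mul (hu2d x))
      exact h.congr_deriv (by (try simp only [Pi.pow_apply, Pi.mul_apply, Pi.add_apply]); push_cast; ring)
    have hq3 : ∀ x, HasDerivAt
        (fun x => deriv (deriv (deriv w)) x * u x + 3 * deriv (deriv w) x * deriv u x
          + 3 * deriv w x * deriv (deriv u) x + w x * deriv (deriv (deriv u)) x)
        (deriv (deriv (deriv (deriv w))) x * u x + 4 * deriv (deriv (deriv w)) x * deriv u x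
          + 6 * deriv (deriv w) x * deriv (deriv u) x
          + 4 * deriv w x * deriv (deriv (deriv u)) x
          + w x * deriv (deriv (deriv (deriv u))) x) x := by
      intro x
      have h := ((((hw3d x).mul (hud x)).add (((hw2d x).const_mul 3).mul (hu1d x))).add
        (((hw1d x).const_mul 3).mul (hu2d x))).add ((hwd x).mul (hu3d x))
      exact h.congr_deriv (by (try simp only [Pi.pow_apply, Pi.mul_apply, Pi.add_apply]); push_cast; ring)
    -- jets of f = ψ * w^3
    have hF : ∀ x, HasDerivAt (fun t => ψ t * w t ^ 3)
        (deriv ψ x * w x ^ 3 + 3 * ψ x * w x ^ 2 * deriv w x) x := by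
      intro x
      have h := (hsd x).mul ((hwd x).pow 3)
      exact h.congr_deriv (by (try simp only [Pi.pow_apply, Pi.mul_apply, Pi.add_apply]); push_cast; ring)
    have hF1 : ∀ x, HasDerivAt
        (fun x => deriv ψ x * w x ^ 3 + 3 * ψ x * w x ^ 2 * deriv w x)
        (deriv (deriv ψ) x * w x ^ 3 + 6 * deriv ψ x * w x ^ 2 * deriv w x
          + 6 * ψ x * w x * deriv w x ^ 2 + 3 * ψ x * w x ^ 2 * deriv (deriv w) x) x := by
      intro x
      have h := ((hs1d x).mul ((hwd x).pow 3)).add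
        ((((hsd x).const_mul 3).mul ((hwd x).pow 2)).mul (hw1d x))
      exact h.congr_deriv (by (try simp only [Pi.pow_apply, Pi.mul_apply, Pi.add_apply]); push_cast; ring)
    have hF2 : ∀ x, HasDerivAt
        (fun x => deriv (deriv ψ) x * w x ^ 3 + 6 * deriv ψ x * w x ^ 2 * deriv w x
          + 6 * ψ x * w x * deriv w x ^ 2 + 3 * ψ x * w x ^ 2 * deriv (deriv w) x)
        (deriv (deriv (deriv ψ)) x * w x ^ 3 + 9 * deriv (deriv ψ) x * w x ^ 2 * deriv w x
          + 18 * deriv ψ x * w x * deriv w x ^ 2 + 9 * deriv ψ x * w x ^ 2 * deriv (deriv w) x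
          + 6 * ψ x * deriv w x ^ 3 + 18 * ψ x * w x * deriv w x * deriv (deriv w) x
          + 3 * ψ x * w x ^ 2 * deriv (deriv (deriv w)) x) x := by
      intro x
      have h := ((((hs2d x).mul ((hwd x).pow 3)).add
        ((((hs1d x).const_mul 6).mul ((hwd x).pow 2)).mul (hw1d x))).add
        ((((hsd x).const_mul 6).mul (hwd x)).mul ((hw1d x).pow 2))).add
        ((((hsd x).const_mul 3).mul ((hwd x).pow 2)).mul (hw2d x))
      exact h.congr_deriv (by (try simp only [Pi.pow_apply, Pi.mul_apply, Pi.add_apply]); push_cast; ring)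
    have hF3 : ∀ x, HasDerivAt
        (fun x => deriv (deriv (deriv ψ)) x * w x ^ 3
          + 9 * deriv (deriv ψ) x * w x ^ 2 * deriv w x
          + 18 * deriv ψ x * w x * deriv w x ^ 2 + 9 * deriv ψ x * w x ^ 2 * deriv (deriv w) x
          + 6 * ψ x * deriv w x ^ 3 + 18 * ψ x * w x * deriv w x * deriv (deriv w) x
          + 3 * ψ x * w x ^ 2 * deriv (deriv (deriv w)) x)
        (deriv (deriv (deriv (deriv ψ))) x * w x ^ 3
          + 12 * deriv (deriv (deriv ψ)) x * w x ^ 2 * deriv w x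
          + 36 * deriv (deriv ψ) x * w x * deriv w x ^ 2
          + 18 * deriv (deriv ψ) x * w x ^ 2 * deriv (deriv w) x
          + 24 * deriv ψ x * deriv w x ^ 3
          + 72 * deriv ψ x * w x * deriv w x * deriv (deriv w) x
          + 12 * deriv ψ x * w x ^ 2 * deriv (deriv (deriv w)) x
          + 36 * ψ x * deriv w x ^ 2 * deriv (deriv w) x
          + 24 * ψ x * w x * deriv w x * deriv (deriv (deriv w)) x
          + 18 * ψ x * w x * deriv (deriv w) x ^ 2
          + 3 * ψ x * w x ^ 2 * deriv (deriv (deriv (deriv w))) x) x := by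
      intro x
      have h := ((((((hs3d x).mul ((hwd x).pow 3)).add
        ((((hs2d x).const_mul 9).mul ((hwd x).pow 2)).mul (hw1d x))).add
        ((((hs1d x).const_mul 18).mul (hwd x)).mul ((hw1d x).pow 2))).add
        ((((hs1d x).const_mul 9).mul ((hwd x).pow 2)).mul (hw2d x))).add
        ((((hsd x).const_mul 6).mul ((hw1d x).pow 3)).add
          (((((hsd x).const_mul 18).mul (hwd x)).mul (hw1d x)).mul (hw2d x)))).add
        ((((hsd x).const_mul 3).mul ((hwd x).pow 2)).mul (hw3d x))
      refine (h.congr_of_eventuallyEq (Filter.Eventually.of_forall fun y => ?_)).congr_deriv ?_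
      · simp only [Pi.pow_apply, Pi.mul_apply, Pi.add_apply]; ring
      · simp only [Pi.pow_apply, Pi.mul_apply, Pi.add_apply]; push_cast; ring
    have e1 : (fun t => φ t * v t) = (fun t => (w t * u t) ^ 3) :=
      funext fun t => by rw [mul_pow, hw3 t, hu3 t]
    have e2 : v = fun t => u t ^ 3 := funext fun t => (hu3 t).symm
    have e3 : (fun t => ψ t * φ t) = (fun t => ψ t * w t ^ 3) :=
      funext fun t => by rw [hw3 t]
    have r5 : (φ θ) ^ ((5:ℝ)/3) = w θ ^ 5 := by rw [← hw3 θ, cube_rpow_53 (hwpos θ)]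
    rw [e1, r5]
    conv_rhs => rw [e2, e3]
    rw [POp_cube α (fun t => w t * u t) _ _ _ _ ψ (deriv ψ) (deriv (deriv ψ))
      (deriv (deriv (deriv ψ))) (deriv (deriv (deriv (deriv ψ))))
      (fun x => mul_pos (hwpos x) (hupos x)) hq hq1 hq2 hq3 hsd hs1d hs2d hs3d θ]
    rw [POp_cube α u (deriv u) (deriv (deriv u)) (deriv (deriv (deriv u)))
      (deriv (deriv (deriv (deriv u)))) (fun t => ψ t * w t ^ 3) _ _ _ _
      hupos hud hu1d hu2d hu3d hF hF1 hF2 hF3 θ]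
    ring
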